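/- Let h, g : ℝ^d → ℝ be convex piecewise-affine functions, let f = h − g, fix w ∈ ℝ^d, and set X = ∂h(w), Y = ∂g(w) (the convex subdifferentials). Then the Fréchet subdifferential of f at w equals {s ∈ ℝ^d : s + Y ⊆ X}. -/

import Mathlib

open scoped RealInnerProductSpace
open Filter

noncomputable section

abbrev E (d : ℕ) := EuclideanSpace ℝ (Fin d)

def IsPiecewiseAffine {d : ℕ} (f : E d → ℝ) : Prop :=
  ∃ (n : ℕ) (C : Fin n → Set (E d)),
    (⋃ i, C i) = Set.univ ∧
    (∀ i, ∃ (m : ℕ) (a : Fin m → E d) (b : Fin m → ℝ),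
      C i = {x | ∀ j, ⟪a j, x⟫ ≤ b j}) ∧
    (∀ i, ∃ (g : E d) (c : ℝ), ∀ x ∈ C i, f x = ⟪g, x⟫ + c)

/-- The Fréchet subdifferential, in the equivalent `ε`-form of the liminf definition. -/
def frechetSubdiff {d : ℕ} (f : E d → ℝ) (x : E d) : Set (E d) :=
  {g | ∀ ε : ℝ, 0 < ε →
    ∀ᶠ y in nhdsWithin x {x}ᶜ, -ε * ‖y - x‖ ≤ f y - f x - ⟪g, y - x⟫}

/-- The convex subdifferential of a function at a point. -/
def convexSubdiff {d : ℕ} (f : E d → ℝ) (x : E d) : Set (E d) :=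
  {s | ∀ y : E d, f x + ⟪s, y - x⟫ ≤ f y}

/-! Near `w`, a convex piecewise-affine function is the maximum of its affine pieces that are
active at `w`. Hence `h (w + u) - h w = φ u` for small `u`, where `φ`, the maximum of the active
slopes, is positively homogeneous and is the support function of `∂h(w)` (each active slope lies
in `∂h(w)`). Then `f (w + u) - f w = φ u - ψ u` near `0`, and by homogeneity `s` is a Fréchet
subgradient iff `⟪s, ·⟫ + ψ ≤ φ`, i.e. `⟪s, ·⟫ + σ_Y ≤ σ_X`, which says `s + Y ⊆ X`. -/

open Set Topology

variable {F : Type*} [NormedAddCommGroup F] [InnerProductSpace ℝ F]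

theorem ConvexOn.inner_add_le_of_eqOn {h : F → ℝ} (hconv : ConvexOn ℝ univ h) {a : F} {b : ℝ}
    {C : Set F} {z : F} (hz : z ∈ interior C) (heq : ∀ x ∈ C, h x = ⟪a, x⟫ + b) (x : F) :
    ⟪a, x⟫ + b ≤ h x := by
  have hconcave : ConcaveOn ℝ univ fun x => ⟪a, x⟫ + b :=
    ((innerₛₗ ℝ a).concaveOn convex_univ).add (concaveOn_const b convex_univ)
  have hmin : IsLocalMin (h - fun x => ⟪a, x⟫ + b) z := by
    filter_upwards [mem_interior_iff_mem_nhds.1 hz] with y hy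
    simp [heq z (interior_subset hz), heq y hy]
  have := IsMinOn.of_isLocalMin_of_convex_univ hmin (hconv.sub hconcave) x
  simp only [Pi.sub_apply, heq z (interior_subset hz), sub_self] at this
  linarith

theorem isClosed_setOf_forall_inner_le {m : ℕ} (a : Fin m → F) (b : Fin m → ℝ) :
    IsClosed {x | ∀ j, ⟪a j, x⟫ ≤ b j} := by
  simp only [ofPred_forall]
  exact isClosed_iInter fun j => isClosed_le (by fun_prop) continuous_const

theorem ConvexOn.exists_eq_sup'_of_isPiecewiseAffine {d : ℕ} {h : E d → ℝ}
    (hconv : ConvexOn ℝ univ h) (hPA : IsPiecewiseAffine h) :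
    ∃ (n : ℕ) (a : Fin n → E d) (c : Fin n → ℝ) (S : Finset (Fin n)) (hS : S.Nonempty),
      h = fun x => S.sup' hS fun i => ⟪a i, x⟫ + c i := by
  classical
  obtain ⟨n, C, hcover, hpoly, haff⟩ := hPA
  choose a c haff using haff
  have hdense : Dense (⋃ i, interior (C i)) := by
    refine dense_iUnion_interior_of_closed (fun i => ?_) hcover
    obtain ⟨m, p, q, hC⟩ := hpoly i
    exact hC ▸ isClosed_setOf_forall_inner_le p q
  set S := Finset.univ.filter fun i => (interior (C i)).Nonempty
  have hmemS {x : E d} {i : Fin n} (hx : x ∈ interior (C i)) : i ∈ S := by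
    simpa [S] using ⟨x, hx⟩
  have hS : S.Nonempty := by
    obtain ⟨x, hx⟩ := hdense.nonempty
    obtain ⟨i, hi⟩ := mem_iUnion.1 hx
    exact ⟨i, hmemS hi⟩
  have hle (x : E d) : (S.sup' hS fun i => ⟪a i, x⟫ + c i) ≤ h x := by
    refine Finset.sup'_le _ _ fun i hi => ?_
    obtain ⟨z, hz⟩ := (Finset.mem_filter.1 hi).2
    exact hconv.inner_add_le_of_eqOn hz (haff i) x
  refine ⟨n, a, c, S, hS, Continuous.ext_on hdense ?_ (by fun_prop) fun x hx => ?_⟩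
  · exact continuousOn_univ.1 (hconv.continuousOn isOpen_univ)
  · obtain ⟨i, hi⟩ := mem_iUnion.1 hx
    refine le_antisymm ?_ (hle x)
    rw [haff i x (interior_subset hi)]
    exact Finset.le_sup' (fun i => ⟪a i, x⟫ + c i) (hmemS hi)

section ActiveIndices

variable {X ι : Type*}

def Finset.activeIndices (S : Finset ι) (f : ι → X → ℝ) (w : X) : Finset ι :=
  S.filter fun i => ∀ j ∈ S, f j w ≤ f i w

theorem Finset.activeIndices_subset {S : Finset ι} {f : ι → X → ℝ} {w : X} :
    S.activeIndices f w ⊆ S :=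
  Finset.filter_subset _ S

theorem Finset.activeIndices_nonempty {S : Finset ι} (hS : S.Nonempty) (f : ι → X → ℝ) (w : X) :
    (S.activeIndices f w).Nonempty := by
  classical
  obtain ⟨i, hi, hmax⟩ := S.exists_max_image (f · w) hS
  exact ⟨i, Finset.mem_filter.2 ⟨hi, hmax⟩⟩

theorem Finset.apply_eq_sup'_of_mem_activeIndices {S : Finset ι} (hS : S.Nonempty)
    {f : ι → X → ℝ} {w : X} {i : ι} (hi : i ∈ S.activeIndices f w) :
    f i w = S.sup' hS (f · w) :=
  have hi := Finset.mem_filter.1 hi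
  le_antisymm (Finset.le_sup' (f · w) hi.1) (Finset.sup'_le _ _ hi.2)

theorem Finset.eventually_sup'_eq_sup'_activeIndices [TopologicalSpace X] {S : Finset ι}
    (hS : S.Nonempty) {f : ι → X → ℝ} {w : X} (hf : ∀ i ∈ S, ContinuousAt (f i) w) :
    ∀ᶠ x in 𝓝 w, S.sup' hS (f · x) =
      (S.activeIndices f w).sup' (S.activeIndices_nonempty hS f w) (f · x) := by
  set A := S.activeIndices f w
  obtain ⟨j, hj⟩ := S.activeIndices_nonempty hS f w
  obtain ⟨hjS, hjmax⟩ := Finset.mem_filter.1 hj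
  have hinactive : ∀ i ∈ S, ∀ᶠ x in 𝓝 w, i ∉ A → f i x < f j x := by
    intro i hi
    by_cases hiA : i ∈ A
    · exact Eventually.of_forall fun _ h => absurd hiA h
    · have hlt : f i w < f j w := by
        by_contra! hle
        exact hiA (Finset.mem_filter.2 ⟨hi, fun k hk => (hjmax k hk).trans hle⟩)
      filter_upwards [(hf i hi).eventually_lt (hf j hjS) hlt] with x hx _ using hx
  filter_upwards [(Filter.eventually_all_finset S).2 hinactive] with x hx
  refine le_antisymm (Finset.sup'_le _ _ fun i hi => ?_)
    (Finset.sup'_mono _ Finset.activeIndices_subset _)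
  by_cases hiA : i ∈ A
  · exact Finset.le_sup' (f · x) hiA
  · exact (hx i hi hiA).le.trans (Finset.le_sup' (f · x) hj)

end ActiveIndices

theorem convexSubdiff_subset_frechetSubdiff {d : ℕ} (f : E d → ℝ) (w : E d) :
    convexSubdiff f w ⊆ frechetSubdiff f w := by
  intro s hs ε hε
  filter_upwards with y
  linarith [hs y, mul_nonneg hε.le (norm_nonneg (y - w))]

/-- Then `φ = f'(w; ·)`, and the first-order expansion of `f` at `w` is exact near `w`. -/
structure HasConicExpansionAt (f φ : F → ℝ) (w : F) : Prop where
  map_smul_of_nonneg : ∀ t : ℝ, 0 ≤ t → ∀ u, φ (t • u) = t * φ u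
  eventually_sub_eq : ∀ᶠ u in 𝓝 0, f (w + u) - f w = φ u

namespace HasConicExpansionAt

section

variable {f g φ ψ : F → ℝ} {w : F}

theorem map_zero (hf : HasConicExpansionAt f φ w) : φ 0 = 0 := by
  simpa using hf.map_smul_of_nonneg 0 le_rfl 0

theorem sub (hf : HasConicExpansionAt f φ w) (hg : HasConicExpansionAt g ψ w) :
    HasConicExpansionAt (fun x => f x - g x) (fun u => φ u - ψ u) w where
  map_smul_of_nonneg t ht u := by
    rw [hf.map_smul_of_nonneg t ht, hg.map_smul_of_nonneg t ht, mul_sub]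
  eventually_sub_eq := by
    filter_upwards [hf.eventually_sub_eq, hg.eventually_sub_eq] with u hfu hgu
    linarith

end

section EuclideanSpace

variable {d : ℕ} {f φ : E d → ℝ} {w : E d}

theorem frechetSubdiff_eq (hf : HasConicExpansionAt f φ w) :
    frechetSubdiff f w = {s | ∀ u, ⟪s, u⟫ ≤ φ u} := by
  ext s
  constructor
  · intro hs u
    rcases eq_or_ne u 0 with rfl | hu
    · simp [hf.map_zero]
    have hu0 : 0 < ‖u‖ := norm_pos_iff.2 hu
    refine le_of_forall_pos_le_add fun ε hε => ?_
    -- Along the ray `w + t • u`, `t ↓ 0`, the Fréchet inequality scales by `t`.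
    have hray : Tendsto (fun t : ℝ => w + t • u) (𝓝[>] 0) (𝓝[≠] w) := by
      refine tendsto_nhdsWithin_of_tendsto_nhds_of_eventually_within _ ?_ ?_
      · exact ((by fun_prop : Continuous fun t : ℝ => w + t • u).tendsto' 0 w
          (by simp)).mono_left nhdsWithin_le_nhds
      · filter_upwards [self_mem_nhdsWithin] with t (ht : 0 < t)
        simpa [ht.ne'] using hu
    have hsmall : Tendsto (fun t : ℝ => t • u) (𝓝[>] 0) (𝓝 0) :=
      ((by fun_prop : Continuous fun t : ℝ => t • u).tendsto' 0 0
        (by simp)).mono_left nhdsWithin_le_nhds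
    obtain ⟨t, ⟨ht : 0 < t, hfr⟩, hexp⟩ := ((eventually_mem_nhdsWithin.and
      (hray.eventually (hs (ε / ‖u‖) (by positivity)))).and
      (hsmall.eventually hf.eventually_sub_eq)).exists
    simp only [add_sub_cancel_left, hf.map_smul_of_nonneg t (le_of_lt ht), norm_smul,
      inner_smul_right, Real.norm_eq_abs, abs_of_pos ht] at hfr hexp
    rw [hexp] at hfr
    have : t * ⟪s, u⟫ ≤ t * (φ u + ε) := by
      have : ε / ‖u‖ * (t * ‖u‖) = t * ε := by field_simp
      linarith
    exact le_of_mul_le_mul_left this ht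
  · intro hs ε hε
    have hnear : Tendsto (fun y => y - w) (𝓝[≠] w) (𝓝 0) :=
      ((by fun_prop : Continuous fun y : E d => y - w).tendsto' w 0
        (by simp)).mono_left nhdsWithin_le_nhds
    filter_upwards [hnear.eventually hf.eventually_sub_eq] with y hy
    rw [add_sub_cancel] at hy
    linarith [hs (y - w), mul_nonneg hε.le (norm_nonneg (y - w))]

theorem isGreatest_inner_convexSubdiff (hf : HasConicExpansionAt f φ w)
    (hatt : ∀ u, φ u ∈ (fun s => ⟪s, u⟫) '' convexSubdiff f w) (u : E d) :
    IsGreatest ((fun s => ⟪s, u⟫) '' convexSubdiff f w) (φ u) := by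
  refine ⟨hatt u, ?_⟩
  rintro _ ⟨s, hs, rfl⟩
  have := convexSubdiff_subset_frechetSubdiff f w hs
  rw [hf.frechetSubdiff_eq] at this
  exact this u

theorem convexSubdiff_eq (hf : HasConicExpansionAt f φ w)
    (hatt : ∀ u, φ u ∈ (fun s => ⟪s, u⟫) '' convexSubdiff f w) :
    convexSubdiff f w = {s | ∀ u, ⟪s, u⟫ ≤ φ u} := by
  refine (hf.frechetSubdiff_eq ▸ convexSubdiff_subset_frechetSubdiff f w).antisymm
    fun s hs y => ?_
  obtain ⟨t, ht, htu⟩ := hatt (y - w)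
  have := ht y
  linarith [hs (y - w)]

end EuclideanSpace

end HasConicExpansionAt

theorem hasConicExpansionAt_sup'_inner_add {ι : Type*} {S : Finset ι} (hS : S.Nonempty)
    (a : ι → F) (c : ι → ℝ) (w : F) :
    HasConicExpansionAt (fun x => S.sup' hS fun i => ⟪a i, x⟫ + c i)
      (fun u => (S.activeIndices (fun i x => ⟪a i, x⟫ + c i) w).sup'
        (S.activeIndices_nonempty hS _ w) fun i => ⟪a i, u⟫) w where
  map_smul_of_nonneg t ht u := by
    simp only [inner_smul_right]
    exact (Finset.mul₀_sup' ht _ _ _).symm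
  eventually_sub_eq := by
    have hshift : Tendsto (fun u : F => w + u) (𝓝 0) (𝓝 w) :=
      (by fun_prop : Continuous fun u : F => w + u).tendsto' 0 w (add_zero w)
    filter_upwards [hshift.eventually (S.eventually_sup'_eq_sup'_activeIndices hS
      (f := fun i x => ⟪a i, x⟫ + c i) fun i _ => by fun_prop)] with u hu
    rw [hu, sub_eq_iff_eq_add', Finset.add_sup']
    refine Finset.sup'_congr _ rfl fun i hi => ?_
    rw [← Finset.apply_eq_sup'_of_mem_activeIndices hS hi, inner_add_right]
    ring

theorem ConvexOn.exists_hasConicExpansionAt_of_isPiecewiseAffine {d : ℕ} {h : E d → ℝ}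
    (hconv : ConvexOn ℝ univ h) (hPA : IsPiecewiseAffine h) (w : E d) :
    ∃ φ, HasConicExpansionAt h φ w ∧ ∀ u, φ u ∈ (fun s => ⟪s, u⟫) '' convexSubdiff h w := by
  obtain ⟨n, a, c, S, hS, rfl⟩ := hconv.exists_eq_sup'_of_isPiecewiseAffine hPA
  refine ⟨_, hasConicExpansionAt_sup'_inner_add hS a c w, fun u => ?_⟩
  obtain ⟨i, hi, hmax⟩ :=
    Finset.exists_mem_eq_sup' (S.activeIndices_nonempty hS _ w) fun i => ⟪a i, u⟫
  refine ⟨a i, fun y => ?_, hmax.symm⟩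
  have := Finset.le_sup' (fun i => ⟪a i, y⟫ + c i) (Finset.activeIndices_subset hi)
  dsimp only
  rw [← Finset.apply_eq_sup'_of_mem_activeIndices hS hi, inner_sub_right]
  linarith

theorem image_add_subset_setOf_inner_le_iff {φ ψ : F → ℝ} {Y : Set F}
    (hY : ∀ u, IsGreatest ((fun y => ⟪y, u⟫) '' Y) (ψ u)) (s : F) :
    (fun y => s + y) '' Y ⊆ {x | ∀ u, ⟪x, u⟫ ≤ φ u} ↔ ∀ u, ⟪s, u⟫ ≤ φ u - ψ u := by
  constructor
  · intro hsub u
    obtain ⟨y, hy, hyu⟩ := (hY u).1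
    have := hsub ⟨y, hy, rfl⟩ u
    dsimp only at hyu
    rw [inner_add_left, hyu] at this
    linarith
  · rintro hs _ ⟨y, hy, rfl⟩ u
    rw [inner_add_left]
    linarith [hs u, (hY u).2 ⟨y, hy, rfl⟩]

theorem frechet_subdiff_dc_eq_translates {d : ℕ} (h g : E d → ℝ)
    (hconv : ConvexOn ℝ Set.univ h) (gconv : ConvexOn ℝ Set.univ g)
    (hPA : IsPiecewiseAffine h) (gPA : IsPiecewiseAffine g) (w : E d) :
    frechetSubdiff (fun x => h x - g x) w =
      {s : E d | (fun y => s + y) '' convexSubdiff g w ⊆ convexSubdiff h w} := by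
  obtain ⟨φ, hφ, hφatt⟩ := hconv.exists_hasConicExpansionAt_of_isPiecewiseAffine hPA w
  obtain ⟨ψ, hψ, hψatt⟩ := gconv.exists_hasConicExpansionAt_of_isPiecewiseAffine gPA w
  ext s
  rw [(hφ.sub hψ).frechetSubdiff_eq, hφ.convexSubdiff_eq hφatt]
  exact (image_add_subset_setOf_inner_le_iff (hψ.isGreatest_inner_convexSubdiff hψatt) s).symm
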